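/- Under the standing assumption, for X ∈ L⁰ the following are equivalent: (1) X ∈ M^φ̂_u; (2) lim_{N→∞} ‖X · 1_{{|X| > N}}‖_φ̂ = 0; (3) lim_n ‖X · 1_{A_n}‖_φ̂ = 0 whenever (A_n) ⊆ 𝔉 satisfies ℙ(A_n) ↓ 0. -/

import Mathlib

/-!
The implications (1) ⇒ (3) and (2) ⇒ (1) rest on three properties of `φ̂` on nonnegative
functions: `φ̂ ≤ φ₀` on `L^∞`; a function below `t U + (1 - t) V` has `φ̂` at most
`t a + (1 - t) b` when `φ̂ U ≤ a` and `φ̂ V ≤ b`; and `φ̂ ≥ 0`. Only the last one is deep: it needs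
some `Z ∈ dom φ₀*` with `φ₀*(Z) = 0`, a subgradient of `φ₀` at `0` lying in `L¹`. Hahn–Banach
gives a linear minorant `L` of `φ₀` on `L^∞`; monotonicity and the Lebesgue property of `φ₀` make
`A ↦ L 1_A` a measure absolutely continuous with respect to `ℙ`, and its density is such a `Z`.

For (1) ⇒ (3), split `X` at a level `N`:
`|X 1_A| / r ≤ ½ (2N/r) 1_A + ½ (2/r) |X| 1_{|X| > N}`. The tail term has `φ̂ ≤ 1` for large `N`
by (1), and `φ̂((2N/r) 1_{A_n}) ≤ φ₀((2N/r) 1_{A_n}) → 0` by the Lebesgue property, since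
`1_{A_n} → 0` in measure. (3) ⇒ (2) is the case `A_N = {|X| > N}`, and (2) ⇒ (1) follows from
`φ̂(l V) ≤ l φ̂(V)` for `l ∈ [0, 1]`.
-/

open MeasureTheory Filter Topology
open scoped ENNReal

noncomputable section

namespace MaxLebExt

variable {Ω : Type*} [MeasurableSpace Ω]

/-- Membership in `L^∞(μ)`. -/
def MemLinf (μ : Measure Ω) (X : Ω → ℝ) : Prop :=
  MemLp X ⊤ μ

/-- Extended-real-valued expectation `𝔼[f] ∈ [-∞,∞]`, defined as the integral of the
positive part minus the integral of the negative part. -/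
def eE (μ : Measure Ω) (f : Ω → ℝ) : EReal :=
  ((∫⁻ ω, ENNReal.ofReal (f ω) ∂μ : ℝ≥0∞) : EReal) -
    ((∫⁻ ω, ENNReal.ofReal (-f ω) ∂μ : ℝ≥0∞) : EReal)

/-- The conjugate `φ*(Z) = sup_{X ∈ L^∞} (𝔼[XZ] - φ(X)) ∈ (-∞,∞]` of a function `φ`
defined (at least) on `L^∞`. -/
def conj (μ : Measure Ω) (φ : (Ω → ℝ) → ℝ) (Z : Ω → ℝ) : EReal :=
  ⨆ X : {X : Ω → ℝ // MemLinf μ X}, (((∫ ω, X.1 ω * Z ω ∂μ) - φ X.1 : ℝ) : EReal)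

/-- `Z ∈ dom φ* = {Z ∈ L¹ : φ*(Z) < ∞}`. -/
def MemDom (μ : Measure Ω) (φ : (Ω → ℝ) → ℝ) (Z : Ω → ℝ) : Prop :=
  Integrable Z μ ∧ conj μ φ Z < ⊤

/-- `X ∈ 𝒟₀ = {X ∈ L⁰ : X⁻ Z ∈ L¹ for all Z ∈ dom φ*}`. -/
def MemD0 (μ : Measure Ω) (φ : (Ω → ℝ) → ℝ) (X : Ω → ℝ) : Prop :=
  AEStronglyMeasurable X μ ∧
    ∀ Z : Ω → ℝ, MemDom μ φ Z → Integrable (fun ω => max (-(X ω)) 0 * Z ω) μ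

/-- The canonical extension `φ̂(X) = sup_{Z ∈ dom φ*} (𝔼[XZ] - φ*(Z))`. -/
def hatphi (μ : Measure Ω) (φ : (Ω → ℝ) → ℝ) (X : Ω → ℝ) : EReal :=
  ⨆ Z : {Z : Ω → ℝ // MemDom μ φ Z},
    (eE μ (fun ω => X ω * Z.1 ω) - conj μ φ Z.1)

/-- The truncated tail `α|X| 1_{{|X| > N}}`. -/
def tailFn (X : Ω → ℝ) (α : ℝ) (N : ℕ) : Ω → ℝ :=
  Set.indicator {ω | (N : ℝ) < |X ω|} fun ω => α * |X ω|

/-- `X ∈ M^φ̂_u`. -/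
def MemMu (μ : Measure Ω) (φ : (Ω → ℝ) → ℝ) (X : Ω → ℝ) : Prop :=
  AEStronglyMeasurable X μ ∧
    ∀ α : ℝ, 0 < α →
      Tendsto (fun N : ℕ => hatphi μ φ (tailFn X α N)) atTop (𝓝 (0 : EReal))

/-- `X ∈ M^φ̂` (the Orlicz heart of `φ̂`). -/
def MemM (μ : Measure Ω) (φ : (Ω → ℝ) → ℝ) (X : Ω → ℝ) : Prop :=
  AEStronglyMeasurable X μ ∧
    ∀ α : ℝ, 0 < α → hatphi μ φ (fun ω => α * |X ω|) < ⊤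

/-- A finite monotone convex function on `L^∞`, compatible with a.e. equality. -/
structure IsMCLinf (μ : Measure Ω) (φ : (Ω → ℝ) → ℝ) : Prop where
  congr : ∀ X Y : Ω → ℝ, MemLinf μ X → MemLinf μ Y → X =ᵐ[μ] Y → φ X = φ Y
  mono : ∀ X Y : Ω → ℝ, MemLinf μ X → MemLinf μ Y → X ≤ᵐ[μ] Y → φ X ≤ φ Y
  convex : ∀ X Y : Ω → ℝ, MemLinf μ X → MemLinf μ Y → ∀ t : ℝ, 0 ≤ t → t ≤ 1 →
    φ (fun ω => t * X ω + (1 - t) * Y ω) ≤ t * φ X + (1 - t) * φ Y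

/-- The Lebesgue property on `L^∞`. -/
def LebesgueLinf (μ : Measure Ω) (φ : (Ω → ℝ) → ℝ) : Prop :=
  ∀ (X : ℕ → Ω → ℝ) (X₀ : Ω → ℝ), (∀ n, MemLinf μ (X n)) → MemLinf μ X₀ →
    (∃ C : ℝ, ∀ n, ∀ᵐ ω ∂μ, |X n ω| ≤ C) →
    (∀ᵐ ω ∂μ, Tendsto (fun n => X n ω) atTop (𝓝 (X₀ ω))) →
    Tendsto (fun n => φ (X n)) atTop (𝓝 (φ X₀))

/-- The Fatou property on `L^∞`. -/
def FatouLinf (μ : Measure Ω) (φ : (Ω → ℝ) → ℝ) : Prop :=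
  ∀ (X : ℕ → Ω → ℝ) (X₀ : Ω → ℝ), (∀ n, MemLinf μ (X n)) → MemLinf μ X₀ →
    (∃ C : ℝ, ∀ n, ∀ᵐ ω ∂μ, |X n ω| ≤ C) →
    (∀ᵐ ω ∂μ, Tendsto (fun n => X n ω) atTop (𝓝 (X₀ ω))) →
    φ X₀ ≤ liminf (fun n => φ (X n)) atTop

/-- Standing assumption: `φ₀` is a finite monotone convex function on `L^∞` with the
Lebesgue property and `φ₀(0) = 0`. -/
structure Standing (μ : Measure Ω) (φ₀ : (Ω → ℝ) → ℝ) : Prop where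
  mc : IsMCLinf μ φ₀
  leb : LebesgueLinf μ φ₀
  zero : φ₀ 0 = 0

/-- A solid vector subspace (ideal) of `L⁰`. -/
structure IsSolidSpace (μ : Measure Ω) (S : Set (Ω → ℝ)) : Prop where
  aesm : ∀ X ∈ S, AEStronglyMeasurable X μ
  zero : (0 : Ω → ℝ) ∈ S
  add : ∀ X ∈ S, ∀ Y ∈ S, X + Y ∈ S
  smul : ∀ c : ℝ, ∀ X ∈ S, (fun ω => c * X ω) ∈ S
  solid : ∀ X : Ω → ℝ, AEStronglyMeasurable X μ → ∀ Y ∈ S,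
    (∀ᵐ ω ∂μ, |X ω| ≤ |Y ω|) → X ∈ S

/-- A finite monotone convex function on a solid space `S`. -/
structure IsMCOn (μ : Measure Ω) (S : Set (Ω → ℝ)) (ψ : (Ω → ℝ) → ℝ) : Prop where
  congr : ∀ X ∈ S, ∀ Y ∈ S, X =ᵐ[μ] Y → ψ X = ψ Y
  mono : ∀ X ∈ S, ∀ Y ∈ S, X ≤ᵐ[μ] Y → ψ X ≤ ψ Y
  convex : ∀ X ∈ S, ∀ Y ∈ S, ∀ t : ℝ, 0 ≤ t → t ≤ 1 →
    ψ (fun ω => t * X ω + (1 - t) * Y ω) ≤ t * ψ X + (1 - t) * ψ Y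

/-- The Lebesgue property on a solid space `S`. -/
def LebesgueOn (μ : Measure Ω) (S : Set (Ω → ℝ)) (ψ : (Ω → ℝ) → ℝ) : Prop :=
  ∀ (X : ℕ → Ω → ℝ) (X₀ Y : Ω → ℝ), (∀ n, X n ∈ S) → X₀ ∈ S → Y ∈ S →
    (∀ n, ∀ᵐ ω ∂μ, |X n ω| ≤ Y ω) →
    (∀ᵐ ω ∂μ, Tendsto (fun n => X n ω) atTop (𝓝 (X₀ ω))) →
    Tendsto (fun n => ψ (X n)) atTop (𝓝 (ψ X₀))

/-- The Fatou property on a solid space `S`. -/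
def FatouOn (μ : Measure Ω) (S : Set (Ω → ℝ)) (ψ : (Ω → ℝ) → ℝ) : Prop :=
  ∀ (X : ℕ → Ω → ℝ) (X₀ Y : Ω → ℝ), (∀ n, X n ∈ S) → X₀ ∈ S → Y ∈ S →
    (∀ n, ∀ᵐ ω ∂μ, |X n ω| ≤ Y ω) →
    (∀ᵐ ω ∂μ, Tendsto (fun n => X n ω) atTop (𝓝 (X₀ ω))) →
    ψ X₀ ≤ liminf (fun n => ψ (X n)) atTop

/-- A proper monotone convex function with values in `(-∞,∞]` on a solid space `S`. -/
structure IsMCOnE (μ : Measure Ω) (S : Set (Ω → ℝ)) (φ : (Ω → ℝ) → EReal) : Prop where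
  congr : ∀ X ∈ S, ∀ Y ∈ S, X =ᵐ[μ] Y → φ X = φ Y
  mono : ∀ X ∈ S, ∀ Y ∈ S, X ≤ᵐ[μ] Y → φ X ≤ φ Y
  convex : ∀ X ∈ S, ∀ Y ∈ S, ∀ t : ℝ, 0 < t → t < 1 →
    φ (fun ω => t * X ω + (1 - t) * Y ω) ≤ (t : EReal) * φ X + ((1 - t : ℝ) : EReal) * φ Y
  ne_bot : ∀ X ∈ S, φ X ≠ ⊥
  exists_ne_top : ∃ X ∈ S, φ X ≠ ⊤

/-- The Lebesgue property on a solid space `S` for an extended-real-valued function. -/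
def LebesgueOnE (μ : Measure Ω) (S : Set (Ω → ℝ)) (φ : (Ω → ℝ) → EReal) : Prop :=
  ∀ (X : ℕ → Ω → ℝ) (X₀ Y : Ω → ℝ), (∀ n, X n ∈ S) → X₀ ∈ S → Y ∈ S →
    (∀ n, ∀ᵐ ω ∂μ, |X n ω| ≤ Y ω) →
    (∀ᵐ ω ∂μ, Tendsto (fun n => X n ω) atTop (𝓝 (X₀ ω))) →
    Tendsto (fun n => φ (X n)) atTop (𝓝 (φ X₀))

/-- `(φ, S)` is a Lebesgue extension of `(φ₀, L^∞)`. -/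
structure IsLebExt (μ : Measure Ω) (φ₀ : (Ω → ℝ) → ℝ)
    (S : Set (Ω → ℝ)) (φ : (Ω → ℝ) → EReal) : Prop where
  solid : IsSolidSpace μ S
  linf_mem : ∀ X : Ω → ℝ, MemLinf μ X → X ∈ S
  mc : IsMCOnE μ S φ
  leb : LebesgueOnE μ S φ
  restrict : ∀ X : Ω → ℝ, MemLinf μ X → φ X = (φ₀ X : EReal)

/-- The gauge (Luxemburg-type) functional `‖X‖_φ̂ = inf {λ > 0 : φ̂(|X|/λ) ≤ 1}`,
with `inf ∅ = +∞`. -/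
def gauge (μ : Measure Ω) (φ : (Ω → ℝ) → ℝ) (X : Ω → ℝ) : EReal :=
  sInf {l : EReal | ∃ r : ℝ, 0 < r ∧ l = (r : EReal) ∧
    hatphi μ φ (fun ω => |X ω| / r) ≤ 1}


end MaxLebExt

section DirDerivAtZero

open Set

variable {E : Type*} [AddCommGroup E] [Module ℝ E] {f : E → ℝ}

/-- For convex `f` with `f 0 = 0` the slopes `f (t • x) / t` decrease as `t ↓ 0`, so this infimum
is the one-sided directional derivative of `f` at `0`. -/
def dirDerivAtZero (f : E → ℝ) (x : E) : ℝ := ⨅ t : Ioi (0 : ℝ), f ((t : ℝ) • x) / t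

namespace ConvexOn

variable (hf : ConvexOn ℝ univ f) (hf0 : f 0 = 0)
include hf hf0

theorem slope_zero_mono (x : E) {s t : ℝ} (hs : 0 < s) (hst : s ≤ t) :
    f (s • x) / s ≤ f (t • x) / t := by
  have hg := hf.comp_linearMap (LinearMap.toSpanSingleton ℝ E x)
  have := hg.secant_mono (a := 0) (mem_univ _) (mem_univ s) (mem_univ t) hs.ne'
    (hs.trans_le hst).ne' hst
  simpa [hf0] using this

theorem neg_apply_neg_le_slope_zero (x : E) {t : ℝ} (ht : 0 < t) : -f (-x) ≤ f (t • x) / t := by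
  have hg := hf.comp_linearMap (LinearMap.toSpanSingleton ℝ E x)
  have := hg.secant_mono (a := 0) (x := -1) (mem_univ _) (mem_univ _) (mem_univ t)
    (by norm_num) ht.ne' (by linarith)
  simpa [hf0, div_neg] using this

theorem bddBelow_slope_zero (x : E) :
    BddBelow (range fun t : Ioi (0 : ℝ) => f ((t : ℝ) • x) / t) :=
  ⟨-f (-x), forall_mem_range.2 fun t => hf.neg_apply_neg_le_slope_zero hf0 x t.2⟩

theorem dirDerivAtZero_le_slope (x : E) {t : ℝ} (ht : 0 < t) :
    dirDerivAtZero f x ≤ f (t • x) / t :=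
  ciInf_le (hf.bddBelow_slope_zero hf0 x) ⟨t, ht⟩

theorem dirDerivAtZero_le (x : E) : dirDerivAtZero f x ≤ f x := by
  simpa using hf.dirDerivAtZero_le_slope hf0 x one_pos

omit hf hf0 in
theorem le_dirDerivAtZero {x : E} {c : ℝ} (h : ∀ t : ℝ, 0 < t → c ≤ f (t • x) / t) :
    c ≤ dirDerivAtZero f x :=
  le_ciInf fun t => h t t.2

theorem dirDerivAtZero_smul {c : ℝ} (hc : 0 < c) (x : E) :
    dirDerivAtZero f (c • x) = c * dirDerivAtZero f x := by
  refine le_antisymm ?_ ?_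
  · rw [← div_le_iff₀' hc]
    refine le_dirDerivAtZero fun t ht => ?_
    rw [div_le_iff₀' hc]
    calc dirDerivAtZero f (c • x) ≤ f ((t / c) • c • x) / (t / c) :=
          hf.dirDerivAtZero_le_slope hf0 _ (div_pos ht hc)
      _ = c * (f (t • x) / t) := by
          rw [smul_smul, div_mul_cancel₀ _ hc.ne']
          field_simp
  · refine le_dirDerivAtZero fun t ht => ?_
    calc c * dirDerivAtZero f x ≤ c * (f ((t * c) • x) / (t * c)) :=
          mul_le_mul_of_nonneg_left (hf.dirDerivAtZero_le_slope hf0 x (mul_pos ht hc)) hc.le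
      _ = f (t • c • x) / t := by
          rw [smul_smul]
          field_simp

theorem dirDerivAtZero_add_le (x y : E) :
    dirDerivAtZero f (x + y) ≤ dirDerivAtZero f x + dirDerivAtZero f y := by
  rw [← sub_le_iff_le_add]
  refine le_dirDerivAtZero fun s hs => ?_
  rw [sub_le_comm]
  refine le_dirDerivAtZero fun r hr => ?_
  rw [sub_le_iff_le_add']
  set t := min s r
  have ht : 0 < t := lt_min hs hr
  have hmid : f ((t / 2) • (x + y)) ≤ (f (t • x) + f (t • y)) / 2 := by
    have := hf.2 (mem_univ (t • x)) (mem_univ (t • y)) (by norm_num : (0 : ℝ) ≤ 1 / 2)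
      (by norm_num : (0 : ℝ) ≤ 1 / 2) (by norm_num)
    rw [smul_smul, smul_smul, ← smul_add, one_div_mul_eq_div, smul_eq_mul, smul_eq_mul] at this
    linarith
  calc dirDerivAtZero f (x + y) ≤ f ((t / 2) • (x + y)) / (t / 2) :=
        hf.dirDerivAtZero_le_slope hf0 _ (half_pos ht)
    _ ≤ f (t • x) / t + f (t • y) / t := by
        rw [div_le_iff₀ (half_pos ht)]
        field_simp
        linarith
    _ ≤ f (s • x) / s + f (r • y) / r :=
        add_le_add (hf.slope_zero_mono hf0 x ht (min_le_left _ _))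
          (hf.slope_zero_mono hf0 y ht (min_le_right _ _))

theorem exists_linearMap_le : ∃ L : E →ₗ[ℝ] ℝ, ∀ x, L x ≤ f x := by
  obtain ⟨L, -, hL⟩ := exists_extension_of_le_sublinear (⟨⊥, 0⟩ : E →ₗ.[ℝ] ℝ)
    (dirDerivAtZero f) (fun c hc x => hf.dirDerivAtZero_smul hf0 hc x)
    (hf.dirDerivAtZero_add_le hf0) fun ⟨x, hx⟩ => by
      obtain rfl : x = 0 := by simpa using hx
      exact le_dirDerivAtZero fun t _ => by simp [hf0]
  exact ⟨L, fun x => (hL x).trans (hf.dirDerivAtZero_le hf0 x)⟩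

end ConvexOn

end DirDerivAtZero

theorem EReal.coe_ennreal_sub_coe_le_coe_iff {x : ℝ≥0∞} {a c : ℝ} (hac : 0 ≤ a + c) :
    (x : EReal) - c ≤ a ↔ x ≤ ENNReal.ofReal (a + c) := by
  rw [EReal.sub_le_iff_le_add (.inl (EReal.coe_ne_bot c)) (.inl (EReal.coe_ne_top c)),
    ← EReal.coe_add, ← max_eq_left hac, ← EReal.coe_ennreal_ofReal,
    EReal.coe_ennreal_le_coe_ennreal_iff, max_eq_left hac]

theorem EReal.tendsto_nhds_zero_of_eventually_le {ι : Type*} {l : Filter ι} {u : ι → EReal}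
    (h0 : ∀ i, 0 ≤ u i) (h : ∀ r : ℝ, 0 < r → ∀ᶠ i in l, u i ≤ r) : Tendsto u l (𝓝 0) := by
  refine tendsto_order.2 ⟨fun a ha => .of_forall fun i => ha.trans_le (h0 i), fun b hb => ?_⟩
  obtain ⟨r, hr0, hrb⟩ := EReal.exists_between_coe_real hb
  exact (h r (EReal.coe_pos.1 hr0)).mono fun i hi => hi.trans_lt hrb

namespace MaxLebExt

variable {Ω : Type*}

theorem tailFn_eq_mul_abs_indicator (X : Ω → ℝ) (α : ℝ) (N : ℕ) :
    tailFn X α N = fun ω => α * |{ω | (N : ℝ) < |X ω|}.indicator X ω| := by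
  funext ω
  by_cases hω : (N : ℝ) < |X ω| <;> simp [tailFn, hω]

theorem abs_indicator_div_le (X : Ω → ℝ) (A : Set Ω) (N : ℕ) {r : ℝ} (hr : 0 < r) (ω : Ω) :
    |A.indicator X ω| / r ≤
      1 / 2 * A.indicator (fun _ => 2 * N / r) ω + (1 - 1 / 2) * tailFn X (2 / r) N ω := by
  by_cases hωA : ω ∈ A
  · simp only [Set.indicator_of_mem hωA, tailFn]
    by_cases hωN : (N : ℝ) < |X ω|
    · rw [Set.indicator_of_mem (by exact hωN)]
      field_simp
      linarith [Nat.cast_nonneg (α := ℝ) N, abs_nonneg (X ω)]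
    · rw [Set.indicator_of_notMem (by exact hωN)]
      field_simp
      linarith [not_lt.1 hωN]
  · simp only [Set.indicator_of_notMem hωA, abs_zero, zero_div]
    have : 0 ≤ tailFn X (2 / r) N ω := Set.indicator_apply_nonneg fun _ => by positivity
    linarith

theorem antitone_setOf_lt_abs (f : Ω → ℝ) : Antitone fun N : ℕ => {ω | (N : ℝ) < |f ω|} :=
  fun _ n hmn ω (hω : (n : ℝ) < |f ω|) => (Nat.cast_le.2 hmn).trans_lt hω

variable [MeasurableSpace Ω]

section Linf

variable {μ : Measure Ω}

theorem memLinf_indicator_const {A : Set Ω} (hA : MeasurableSet A) (c : ℝ) :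
    MemLinf μ (A.indicator fun _ => c) :=
  (memLp_top_const c).indicator hA

theorem MemLinf.exists_ae_abs_le {X : Ω → ℝ} (hX : MemLinf μ X) :
    ∃ C, 0 ≤ C ∧ ∀ᵐ ω ∂μ, |X ω| ≤ C := by
  refine ⟨(eLpNorm X ⊤ μ).toReal, ENNReal.toReal_nonneg, ?_⟩
  filter_upwards [ae_le_eLpNormEssSup (f := X) (μ := μ)] with ω hω
  rw [← eLpNorm_exponent_top] at hω
  simpa using ENNReal.toReal_mono hX.2.ne hω

theorem memLinf_simpleFunc (s : SimpleFunc Ω ℝ) : MemLinf μ s :=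
  s.memLp_top μ

/-- `L^∞` as a space of functions rather than of a.e.-classes, so that `φ₀` restricts to it. -/
def linfSubmodule (μ : Measure Ω) : Submodule ℝ (Ω → ℝ) where
  carrier := {X | MemLinf μ X}
  add_mem' hX hY := MemLp.add hX hY
  zero_mem' := MemLp.zero
  smul_mem' c _ hX := MemLp.const_smul hX c

end Linf

section Lebesgue

variable {μ : Measure Ω} {φ : (Ω → ℝ) → ℝ}

theorem tendstoInMeasure_indicator_const {A : ℕ → Set Ω}
    (hA : Tendsto (fun n => μ (A n)) atTop (𝓝 0)) (c : ℝ) :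
    TendstoInMeasure μ (fun n => (A n).indicator fun _ => c) atTop 0 := by
  refine fun ε hε => tendsto_of_tendsto_of_tendsto_of_le_of_le tendsto_const_nhds hA
    (fun n => zero_le) fun n => measure_mono fun ω hω => ?_
  by_contra hωA
  simp [Set.indicator_of_notMem hωA, not_le.2 hε] at hω

/-- Every subsequence of a sequence converging in measure has a further subsequence converging
a.e., to which the Lebesgue property applies. -/
theorem LebesgueLinf.tendsto_of_tendstoInMeasure (hφ : LebesgueLinf μ φ) {X : ℕ → Ω → ℝ}
    {X₀ : Ω → ℝ} (hX : ∀ n, MemLinf μ (X n)) (hX₀ : MemLinf μ X₀)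
    (hb : ∃ C : ℝ, ∀ n, ∀ᵐ ω ∂μ, |X n ω| ≤ C) (hXX₀ : TendstoInMeasure μ X atTop X₀) :
    Tendsto (fun n => φ (X n)) atTop (𝓝 (φ X₀)) := by
  refine tendsto_of_subseq_tendsto fun ns hns => ?_
  obtain ⟨ms, -, hms⟩ := (hXX₀.comp hns).exists_seq_tendsto_ae
  exact ⟨ms, hφ _ X₀ (fun k => hX _) hX₀ (hb.imp fun C hC k => hC _) hms⟩

theorem Standing.tendsto_indicator_const {φ₀ : (Ω → ℝ) → ℝ} (h : Standing μ φ₀)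
    {A : ℕ → Set Ω} (hAm : ∀ n, MeasurableSet (A n)) (hA : Tendsto (fun n => μ (A n)) atTop (𝓝 0))
    (c : ℝ) : Tendsto (fun n => φ₀ ((A n).indicator fun _ => c)) atTop (𝓝 0) := by
  have := h.leb.tendsto_of_tendstoInMeasure (fun n => memLinf_indicator_const (hAm n) c)
    MemLp.zero ⟨|c|, fun n => .of_forall fun ω => ?_⟩ (tendstoInMeasure_indicator_const hA c)
  · rwa [h.zero] at this
  · by_cases hω : ω ∈ A n <;> simp [hω]

end Lebesgue

section Density

variable {μ : Measure Ω} {φ₀ : (Ω → ℝ) → ℝ}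

theorem IsMCLinf.convexOn (hφ : IsMCLinf μ φ₀) :
    ConvexOn ℝ Set.univ fun X : linfSubmodule μ => φ₀ X := by
  refine ⟨convex_univ, fun X _ Y _ a b ha hb hab => ?_⟩
  obtain rfl : b = 1 - a := by linarith
  exact hφ.convex X Y X.2 Y.2 a ha (by linarith)

def indicatorLinf {A : Set Ω} (hA : MeasurableSet A) : linfSubmodule μ :=
  ⟨A.indicator 1, memLinf_indicator_const hA 1⟩

theorem isSetRing_measurableSet : IsSetRing {A : Set Ω | MeasurableSet A} :=
  ⟨.empty, fun _ _ => .union, fun _ _ => .diff⟩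

variable (h : Standing μ φ₀) {L : linfSubmodule μ →ₗ[ℝ] ℝ} (hL : ∀ X, L X ≤ φ₀ X)
include h hL

theorem linearMinorant_nonneg {X : linfSubmodule μ} (hX : 0 ≤ᵐ[μ] (X : Ω → ℝ)) : 0 ≤ L X := by
  have hmono : φ₀ (-X : linfSubmodule μ) ≤ 0 := h.zero ▸
    h.mc.mono _ _ (-X).2 MemLp.zero (by filter_upwards [hX] with ω hω; simpa using hω)
  linarith [hL (-X), map_neg L X]

theorem linearMinorant_indicator_nonneg {A : Set Ω} (hA : MeasurableSet A) :
    0 ≤ L (indicatorLinf hA) :=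
  linearMinorant_nonneg h hL (.of_forall fun ω => Set.indicator_nonneg (fun _ _ => zero_le_one) ω)

open Classical in
def minorantContent : AddContent ℝ≥0∞ {A : Set Ω | MeasurableSet A} :=
  isSetRing_measurableSet.addContent_of_union
    (fun A => if hA : MeasurableSet A then ENNReal.ofReal (L (indicatorLinf hA)) else 0)
    (by
      rw [dif_pos .empty, ← ENNReal.ofReal_zero, ← map_zero L]
      congr 3
      exact Subtype.ext (Set.indicator_empty _))
    fun {A B} (hA : MeasurableSet A) (hB : MeasurableSet B) hAB => by
      have hsplit : indicatorLinf (μ := μ) (hA.union hB) = indicatorLinf hA + indicatorLinf hB :=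
        Subtype.ext (Set.indicator_union_of_disjoint hAB _)
      rw [dif_pos (hA.union hB), dif_pos hA, dif_pos hB, hsplit, map_add,
        ENNReal.ofReal_add (linearMinorant_indicator_nonneg h hL hA)
          (linearMinorant_indicator_nonneg h hL hB)]

theorem minorantContent_apply {A : Set Ω} (hA : MeasurableSet A) :
    minorantContent h hL A = ENNReal.ofReal (L (indicatorLinf hA)) :=
  dif_pos hA

variable [IsFiniteMeasure μ]

theorem minorantContent_tendsto_zero {A : ℕ → Set Ω} (hA : ∀ n, MeasurableSet (A n))
    (hanti : Antitone A) (hempty : ⋂ n, A n = ∅) :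
    Tendsto (fun n => minorantContent h hL (A n)) atTop (𝓝 0) := by
  have hμ : Tendsto (fun n => μ (A n)) atTop (𝓝 0) := by
    simpa [hempty, Function.comp_def] using
      tendsto_measure_iInter_atTop (fun n => (hA n).nullMeasurableSet) hanti ⟨0, measure_ne_top μ _⟩
  have hφ := ENNReal.tendsto_ofReal (h.tendsto_indicator_const hA hμ 1)
  rw [ENNReal.ofReal_zero] at hφ
  refine tendsto_of_tendsto_of_tendsto_of_le_of_le tendsto_const_nhds hφ (fun n => zero_le)
    fun n => ?_
  rw [minorantContent_apply h hL (hA n)]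
  exact ENNReal.ofReal_le_ofReal (hL _)

def minorantMeasure : Measure Ω :=
  Measure.ofMeasurable (fun A hA => ENNReal.ofReal (L (indicatorLinf hA)))
    (by simpa only [minorantContent_apply h hL .empty] using
      addContent_empty (m := minorantContent h hL))
    fun A hA hdisj => by
      simpa only [minorantContent_apply h hL (MeasurableSet.iUnion hA),
        minorantContent_apply h hL (hA _)] using
        addContent_iUnion_eq_sum_of_tendsto_zero isSetRing_measurableSet
          (minorantContent h hL) (fun B hB => by
            rw [minorantContent_apply h hL hB]; exact ENNReal.ofReal_ne_top)
          (fun B hB => minorantContent_tendsto_zero h hL hB) hA (MeasurableSet.iUnion hA) hdisj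

theorem minorantMeasure_apply {A : Set Ω} (hA : MeasurableSet A) :
    minorantMeasure h hL A = ENNReal.ofReal (L (indicatorLinf hA)) :=
  Measure.ofMeasurable_apply A hA

instance : IsFiniteMeasure (minorantMeasure h hL) :=
  ⟨by rw [minorantMeasure_apply h hL .univ]; exact ENNReal.ofReal_lt_top⟩

theorem minorantMeasure_absolutelyContinuous : minorantMeasure h hL ≪ μ := by
  refine Measure.AbsolutelyContinuous.mk fun A hA hμA => ?_
  have hnull : (indicatorLinf (μ := μ) hA : Ω → ℝ) =ᵐ[μ] 0 := by
    filter_upwards [measure_eq_zero_iff_ae_notMem.1 hμA] with ω hω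
    simp [indicatorLinf, hω]
  rw [minorantMeasure_apply h hL hA, ENNReal.ofReal_eq_zero, ← h.zero]
  exact (hL _).trans (h.mc.congr _ _ (indicatorLinf hA).2 MemLp.zero hnull).le

def minorantDensity (ω : Ω) : ℝ := ((minorantMeasure h hL).rnDeriv μ ω).toReal

theorem integrable_minorantDensity : Integrable (minorantDensity h hL) μ :=
  Measure.integrable_toReal_rnDeriv

theorem integral_indicator_mul_minorantDensity {A : Set Ω} (hA : MeasurableSet A) :
    ∫ ω, A.indicator 1 ω * minorantDensity h hL ω ∂μ = L (indicatorLinf hA) := by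
  have hmul : (fun ω => A.indicator 1 ω * minorantDensity h hL ω) =
      A.indicator (minorantDensity h hL) :=
    funext fun ω => by by_cases hω : ω ∈ A <;> simp [hω]
  rw [hmul, integral_indicator hA]
  simp only [minorantDensity]
  rw [Measure.setIntegral_toReal_rnDeriv (minorantMeasure_absolutelyContinuous h hL),
    measureReal_def, minorantMeasure_apply h hL hA,
    ENNReal.toReal_ofReal (linearMinorant_indicator_nonneg h hL hA)]

theorem integrable_simpleFunc_mul_minorantDensity (s : SimpleFunc Ω ℝ) :
    Integrable (fun ω => s ω * minorantDensity h hL ω) μ := by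
  obtain ⟨C, hC⟩ := s.exists_forall_norm_le
  exact (integrable_minorantDensity h hL).bdd_mul s.aestronglyMeasurable (.of_forall hC)

theorem integral_simpleFunc_mul_minorantDensity (s : SimpleFunc Ω ℝ) :
    ∫ ω, s ω * minorantDensity h hL ω ∂μ = L ⟨s, memLinf_simpleFunc s⟩ := by
  induction s using SimpleFunc.induction with
  | @const c A hA =>
    calc ∫ ω, _ ∂μ = ∫ ω, c * (A.indicator 1 ω * minorantDensity h hL ω) ∂μ := by
          congr 1
          funext ω
          by_cases hω : ω ∈ A <;> simp [hω]
      _ = L (c • indicatorLinf hA) := by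
          rw [integral_const_mul, integral_indicator_mul_minorantDensity h hL hA, map_smul,
            smul_eq_mul]
      _ = _ := by
          congr 1
          ext ω
          by_cases hω : ω ∈ A <;> simp [indicatorLinf, hω]
  | @add s t _ hs ht =>
    have hsplit : (fun ω => (s + t) ω * minorantDensity h hL ω) =
        fun ω => s ω * minorantDensity h hL ω + t ω * minorantDensity h hL ω :=
      funext fun ω => by simp [add_mul]
    rw [hsplit, integral_add (integrable_simpleFunc_mul_minorantDensity h hL s)
      (integrable_simpleFunc_mul_minorantDensity h hL t), hs, ht, ← map_add]
    rfl

/-- The density represents `L` on simple functions; the Lebesgue property of `φ₀` carries the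
bound `L ≤ φ₀` over to bounded a.e. limits of them. -/
theorem integral_mul_minorantDensity_le {X : Ω → ℝ} (hX : MemLinf μ X) :
    ∫ ω, X ω * minorantDensity h hL ω ∂μ ≤ φ₀ X := by
  obtain ⟨C, hC0, hC⟩ := hX.exists_ae_abs_le
  have hXm := hX.1.stronglyMeasurable_mk
  set s := hXm.approxBounded C
  have hs : ∀ n ω, |s n ω| ≤ C := fun n ω => hXm.norm_approxBounded_le hC0 n ω
  have hlim : ∀ᵐ ω ∂μ, Tendsto (fun n => s n ω) atTop (𝓝 (X ω)) := by
    filter_upwards [hX.1.ae_eq_mk, hC] with ω hω hCω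
    rw [hω]
    exact hXm.tendsto_approxBounded_of_norm_le (by rwa [← hω])
  have hint : Tendsto (fun n => ∫ ω, s n ω * minorantDensity h hL ω ∂μ) atTop
      (𝓝 (∫ ω, X ω * minorantDensity h hL ω ∂μ)) := by
    refine tendsto_integral_of_dominated_convergence (fun ω => C * |minorantDensity h hL ω|)
      (fun n => (integrable_simpleFunc_mul_minorantDensity h hL (s n)).1)
      ((integrable_minorantDensity h hL).abs.const_mul C) (fun n => .of_forall fun ω => ?_) ?_
    · rw [Real.norm_eq_abs, abs_mul]
      exact mul_le_mul_of_nonneg_right (hs n ω) (abs_nonneg _)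
    · filter_upwards [hlim] with ω hω using hω.mul_const _
  have hφ : Tendsto (fun n => φ₀ (s n)) atTop (𝓝 (φ₀ X)) :=
    h.leb _ X (fun n => memLinf_simpleFunc _) hX ⟨C, fun n => .of_forall (hs n)⟩ hlim
  exact le_of_tendsto_of_tendsto' hint hφ fun n =>
    (integral_simpleFunc_mul_minorantDensity h hL (s n)).trans_le (hL _)

end Density

section Extension

variable {μ : Measure Ω} {φ₀ : (Ω → ℝ) → ℝ}

theorem eE_congr_ae {f g : Ω → ℝ} (hfg : f =ᵐ[μ] g) : eE μ f = eE μ g := by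
  unfold eE
  congr 2 <;> exact lintegral_congr_ae (hfg.mono fun ω hω => by simp only [hω])

theorem eE_of_ae_nonneg {f : Ω → ℝ} (hf : 0 ≤ᵐ[μ] f) :
    eE μ f = ((∫⁻ ω, ENNReal.ofReal (f ω) ∂μ : ℝ≥0∞) : EReal) := by
  have hneg : ∫⁻ ω, ENNReal.ofReal (-f ω) ∂μ = 0 :=
    (lintegral_congr_ae (hf.mono fun ω hω => ENNReal.ofReal_eq_zero.2 (neg_nonpos.2 hω))).trans
      lintegral_zero
  rw [eE, hneg, EReal.coe_ennreal_zero, sub_zero]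

theorem eE_of_integrable {f : Ω → ℝ} (hf : Integrable f μ) :
    eE μ f = ((∫ ω, f ω ∂μ : ℝ) : EReal) := by
  have hpos : ∫⁻ ω, ENNReal.ofReal (f ω) ∂μ ≠ ⊤ :=
    (lintegral_mono fun ω => Real.ofReal_le_enorm _).trans_lt hf.2 |>.ne
  have hneg : ∫⁻ ω, ENNReal.ofReal (-f ω) ∂μ ≠ ⊤ :=
    (lintegral_mono fun ω => (Real.ofReal_le_enorm _).trans_eq (enorm_neg _)).trans_lt hf.2 |>.ne
  rw [eE, integral_eq_lintegral_pos_part_sub_lintegral_neg_part hf, EReal.coe_sub,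
    ← EReal.coe_ennreal_toReal hpos, ← EReal.coe_ennreal_toReal hneg]

theorem le_conj {X : Ω → ℝ} (hX : MemLinf μ X) (Z : Ω → ℝ) :
    (((∫ ω, X ω * Z ω ∂μ) - φ₀ X : ℝ) : EReal) ≤ conj μ φ₀ Z :=
  le_iSup (fun X : {X // MemLinf μ X} => (((∫ ω, X.1 ω * Z ω ∂μ) - φ₀ X.1 : ℝ) : EReal)) ⟨X, hX⟩

theorem conj_nonneg (h0 : φ₀ 0 = 0) (Z : Ω → ℝ) : 0 ≤ conj μ φ₀ Z := by
  simpa [h0] using le_conj (μ := μ) (φ₀ := φ₀) MemLp.zero Z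

theorem MemDom.conj_eq_coe_toReal (h0 : φ₀ 0 = 0) {Z : Ω → ℝ} (hZ : MemDom μ φ₀ Z) :
    conj μ φ₀ Z = ((conj μ φ₀ Z).toReal : EReal) :=
  (EReal.coe_toReal hZ.2.ne (ne_bot_of_le_ne_bot (by simp) (conj_nonneg h0 Z))).symm

/-- Testing `φ*(Z) < ∞` against `X = -t 1_A` for all `t > 0` forces `∫_A Z ≥ 0`. -/
theorem MemDom.ae_nonneg (h : Standing μ φ₀) {Z : Ω → ℝ} (hZ : MemDom μ φ₀ Z) : 0 ≤ᵐ[μ] Z := by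
  refine ae_nonneg_of_forall_setIntegral_nonneg hZ.1 fun A hA _ => ?_
  set c := (conj μ φ₀ Z).toReal
  have hbound : ∀ t : ℝ, 0 < t → t * -∫ ω in A, Z ω ∂μ ≤ c := fun t ht => by
    have hX := memLinf_indicator_const (μ := μ) hA (-t)
    have hconj := le_conj (φ₀ := φ₀) hX Z
    rw [hZ.conj_eq_coe_toReal h.zero, EReal.coe_le_coe_iff] at hconj
    have hφ : φ₀ (A.indicator fun _ => -t) ≤ 0 := h.zero ▸ h.mc.mono _ _ hX MemLp.zero
      (.of_forall (Set.indicator_nonpos fun _ _ => by linarith))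
    have hint : ∫ ω, A.indicator (fun _ => -t) ω * Z ω ∂μ = t * -∫ ω in A, Z ω ∂μ := by
      simp_rw [← Set.indicator_mul_left]
      rw [integral_indicator hA, integral_const_mul]
      ring
    linarith
  by_contra! hneg
  have hc : 0 ≤ c := EReal.toReal_nonneg (conj_nonneg h.zero Z)
  have := hbound ((c + 1) / -∫ ω in A, Z ω ∂μ) (div_pos (by linarith) (neg_pos.2 hneg))
  rw [div_mul_cancel₀ _ (neg_pos.2 hneg).ne'] at this
  linarith

theorem le_hatphi (T : Ω → ℝ) {Z : Ω → ℝ} (hZ : MemDom μ φ₀ Z) :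
    eE μ (fun ω => T ω * Z ω) - conj μ φ₀ Z ≤ hatphi μ φ₀ T :=
  le_iSup (fun Z : {Z // MemDom μ φ₀ Z} => eE μ (fun ω => T ω * Z.1 ω) - conj μ φ₀ Z.1) ⟨Z, hZ⟩

theorem hatphi_congr_ae {f g : Ω → ℝ} (hfg : f =ᵐ[μ] g) : hatphi μ φ₀ f = hatphi μ φ₀ g :=
  iSup_congr fun Z => by
    rw [eE_congr_ae (g := fun ω => g ω * Z.1 ω) (hfg.mono fun ω hω => by simp only [hω])]

theorem hatphi_le_of_memLinf {T : Ω → ℝ} (hT : MemLinf μ T) : hatphi μ φ₀ T ≤ φ₀ T := by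
  obtain ⟨C, -, hC⟩ := hT.exists_ae_abs_le
  refine iSup_le fun ⟨Z, hZ⟩ => ?_
  rw [eE_of_integrable (hZ.1.bdd_mul hT.1 (by simpa only [Real.norm_eq_abs] using hC))]
  calc ((∫ ω, T ω * Z ω ∂μ : ℝ) : EReal) - conj μ φ₀ Z
      ≤ ((∫ ω, T ω * Z ω ∂μ : ℝ) : EReal) - (((∫ ω, T ω * Z ω ∂μ) - φ₀ T : ℝ) : EReal) :=
        EReal.sub_le_sub le_rfl (le_conj hT Z)
    _ = φ₀ T := by norm_cast; ring

theorem hatphi_le_coe_iff (h : Standing μ φ₀) {T : Ω → ℝ} (hT : ∀ ω, 0 ≤ T ω) {a : ℝ}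
    (ha : 0 ≤ a) : hatphi μ φ₀ T ≤ a ↔ ∀ Z, MemDom μ φ₀ Z →
      ∫⁻ ω, ENNReal.ofReal (T ω * Z ω) ∂μ ≤ ENNReal.ofReal (a + (conj μ φ₀ Z).toReal) := by
  refine iSup_le_iff.trans <| Subtype.forall.trans <| forall_congr' fun Z =>
    forall_congr' fun hZ => ?_
  have hTZ : 0 ≤ᵐ[μ] fun ω => T ω * Z ω :=
    (hZ.ae_nonneg h).mono fun ω hω => mul_nonneg (hT ω) hω
  set c := (conj μ φ₀ Z).toReal
  have hc : 0 ≤ c := EReal.toReal_nonneg (conj_nonneg h.zero Z)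
  rw [eE_of_ae_nonneg hTZ, hZ.conj_eq_coe_toReal h.zero,
    EReal.coe_ennreal_sub_coe_le_coe_iff (add_nonneg ha hc)]

theorem hatphi_le_of_le_convexComb (h : Standing μ φ₀) {U V W : Ω → ℝ} (hUm : AEMeasurable U μ)
    (hU : ∀ ω, 0 ≤ U ω) (hV : ∀ ω, 0 ≤ V ω) (hW : ∀ ω, 0 ≤ W ω) {t : ℝ} (ht0 : 0 ≤ t)
    (ht1 : t ≤ 1) (hWUV : ∀ ω, W ω ≤ t * U ω + (1 - t) * V ω) {a b : ℝ} (ha : 0 ≤ a)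
    (hb : 0 ≤ b) (hUa : hatphi μ φ₀ U ≤ a) (hVb : hatphi μ φ₀ V ≤ b) :
    hatphi μ φ₀ W ≤ ((t * a + (1 - t) * b : ℝ) : EReal) := by
  have ht1' : 0 ≤ 1 - t := sub_nonneg.2 ht1
  rw [hatphi_le_coe_iff h hU ha] at hUa
  rw [hatphi_le_coe_iff h hV hb] at hVb
  rw [hatphi_le_coe_iff h hW (by positivity)]
  intro Z hZ
  set c := (conj μ φ₀ Z).toReal
  have hc : 0 ≤ c := EReal.toReal_nonneg (conj_nonneg h.zero Z)
  calc ∫⁻ ω, ENNReal.ofReal (W ω * Z ω) ∂μ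
      ≤ ∫⁻ ω, ENNReal.ofReal t * ENNReal.ofReal (U ω * Z ω)
          + ENNReal.ofReal (1 - t) * ENNReal.ofReal (V ω * Z ω) ∂μ := by
        refine lintegral_mono_ae ((hZ.ae_nonneg h).mono fun ω (hZω : 0 ≤ Z ω) => ?_)
        rw [← ENNReal.ofReal_mul ht0, ← ENNReal.ofReal_mul ht1',
          ← ENNReal.ofReal_add (by have := hU ω; positivity) (by have := hV ω; positivity)]
        refine ENNReal.ofReal_le_ofReal ?_
        linarith [mul_le_mul_of_nonneg_right (hWUV ω) hZω]
    _ = ENNReal.ofReal t * ∫⁻ ω, ENNReal.ofReal (U ω * Z ω) ∂μ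
          + ENNReal.ofReal (1 - t) * ∫⁻ ω, ENNReal.ofReal (V ω * Z ω) ∂μ := by
        have hm : AEMeasurable (fun ω => ENNReal.ofReal t * ENNReal.ofReal (U ω * Z ω)) μ :=
          (hUm.mul hZ.1.aemeasurable).ennreal_ofReal.const_mul _
        rw [lintegral_add_left' hm,
          lintegral_const_mul' _ _ ENNReal.ofReal_ne_top,
          lintegral_const_mul' _ _ ENNReal.ofReal_ne_top]
    _ ≤ ENNReal.ofReal t * ENNReal.ofReal (a + c)
          + ENNReal.ofReal (1 - t) * ENNReal.ofReal (b + c) := by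
        gcongr
        exacts [hUa Z hZ, hVb Z hZ]
    _ = ENNReal.ofReal (t * a + (1 - t) * b + c) := by
        rw [← ENNReal.ofReal_mul ht0, ← ENNReal.ofReal_mul ht1',
          ← ENNReal.ofReal_add (by positivity) (by positivity)]
        ring_nf

theorem hatphi_zero_le (h : Standing μ φ₀) : hatphi μ φ₀ 0 ≤ ((0 : ℝ) : EReal) :=
  (hatphi_le_of_memLinf MemLp.zero).trans_eq (by rw [h.zero])

theorem hatphi_const_mul_le (h : Standing μ φ₀) {V : Ω → ℝ} (hV : ∀ ω, 0 ≤ V ω) {l : ℝ}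
    (hl0 : 0 ≤ l) (hl1 : l ≤ 1) {b : ℝ} (hb : 0 ≤ b) (hVb : hatphi μ φ₀ V ≤ b) :
    hatphi μ φ₀ (fun ω => l * V ω) ≤ ((l * b : ℝ) : EReal) := by
  have := hatphi_le_of_le_convexComb h aemeasurable_const (fun _ => le_rfl) hV
    (fun ω => mul_nonneg hl0 (hV ω)) (sub_nonneg.2 hl1) (sub_le_self 1 hl0)
    (fun ω => by simp) le_rfl hb (hatphi_zero_le h) hVb
  simpa using this

theorem Standing.exists_memDom_conj_eq_zero [IsFiniteMeasure μ] (h : Standing μ φ₀) :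
    ∃ Z, MemDom μ φ₀ Z ∧ conj μ φ₀ Z = 0 := by
  obtain ⟨L, hL⟩ := h.mc.convexOn.exists_linearMap_le h.zero
  have hconj : conj μ φ₀ (minorantDensity h hL) = 0 :=
    le_antisymm (iSup_le fun X => EReal.coe_nonpos.2 <| sub_nonpos.2 <|
      integral_mul_minorantDensity_le h hL X.2) (conj_nonneg h.zero _)
  exact ⟨_, ⟨integrable_minorantDensity h hL, hconj ▸ EReal.zero_lt_top⟩, hconj⟩

theorem hatphi_nonneg [IsFiniteMeasure μ] (h : Standing μ φ₀) {T : Ω → ℝ} (hT : ∀ ω, 0 ≤ T ω) :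
    0 ≤ hatphi μ φ₀ T := by
  obtain ⟨Z, hZ, hconj⟩ := h.exists_memDom_conj_eq_zero
  refine le_trans ?_ (le_hatphi T hZ)
  rw [eE_of_ae_nonneg ((hZ.ae_nonneg h).mono fun ω hω => mul_nonneg (hT ω) hω), hconj, sub_zero]
  exact EReal.coe_ennreal_nonneg _

end Extension

section Gauge

variable {μ : Measure Ω} {φ₀ : (Ω → ℝ) → ℝ}

theorem gauge_nonneg (Y : Ω → ℝ) : 0 ≤ gauge μ φ₀ Y :=
  le_sInf fun _ ⟨_, hr, hl, _⟩ => hl ▸ EReal.coe_nonneg.2 hr.le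

theorem gauge_le_of_hatphi_le_one {Y : Ω → ℝ} {r : ℝ} (hr : 0 < r)
    (h1 : hatphi μ φ₀ (fun ω => |Y ω| / r) ≤ 1) : gauge μ φ₀ Y ≤ r :=
  sInf_le ⟨r, hr, rfl, h1⟩

theorem exists_hatphi_le_one_of_gauge_lt {Y : Ω → ℝ} {r : ℝ} (hlt : gauge μ φ₀ Y < r) :
    ∃ r', 0 < r' ∧ r' < r ∧ hatphi μ φ₀ (fun ω => |Y ω| / r') ≤ 1 := by
  obtain ⟨_, ⟨r', hr', rfl, h1⟩, hlt'⟩ := sInf_lt_iff.1 hlt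
  exact ⟨r', hr', EReal.coe_lt_coe_iff.1 hlt', h1⟩

theorem gauge_congr_ae {f g : Ω → ℝ} (hfg : f =ᵐ[μ] g) : gauge μ φ₀ f = gauge μ φ₀ g := by
  have : ∀ r : ℝ, hatphi μ φ₀ (fun ω => |f ω| / r) = hatphi μ φ₀ (fun ω => |g ω| / r) :=
    fun r => hatphi_congr_ae (hfg.mono fun ω hω => by simp only [hω])
  simp only [gauge, this]

end Gauge

section Tail

variable {μ : Measure Ω} {φ₀ : (Ω → ℝ) → ℝ} {X : Ω → ℝ}

theorem MemMu.tendsto_gauge_indicator (h : Standing μ φ₀) (hX : MemMu μ φ₀ X) {A : ℕ → Set Ω}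
    (hAm : ∀ n, MeasurableSet (A n)) (hA : Tendsto (fun n => μ (A n)) atTop (𝓝 0)) :
    Tendsto (fun n => gauge μ φ₀ ((A n).indicator X)) atTop (𝓝 0) := by
  refine EReal.tendsto_nhds_zero_of_eventually_le (fun n => gauge_nonneg _) fun r hr => ?_
  obtain ⟨N, hN⟩ := ((hX.2 (2 / r) (by positivity)).eventually_lt_const
    (show (0 : EReal) < 1 from zero_lt_one)).exists
  have hV := (h.tendsto_indicator_const hAm hA (2 * N / r)).eventually_lt_const
    (show (0 : ℝ) < 1 from zero_lt_one)
  filter_upwards [hV] with n hn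
  refine gauge_le_of_hatphi_le_one hr ?_
  have := hatphi_le_of_le_convexComb h
    ((measurable_const.indicator (hAm n)).aemeasurable)
    (fun ω => Set.indicator_apply_nonneg fun _ => by positivity)
    (fun ω => Set.indicator_apply_nonneg fun _ => by positivity)
    (fun ω => by positivity) (by norm_num) (by norm_num) (abs_indicator_div_le X (A n) N hr)
    zero_le_one zero_le_one
    ((hatphi_le_of_memLinf (memLinf_indicator_const (hAm n) _)).trans
      (by exact_mod_cast hn.le)) hN.le
  norm_num at this
  exact this

theorem memMu_of_tendsto_gauge_tail [IsFiniteMeasure μ] (h : Standing μ φ₀)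
    (hX : AEStronglyMeasurable X μ)
    (htail : Tendsto (fun N : ℕ => gauge μ φ₀ ({ω | (N : ℝ) < |X ω|}.indicator X)) atTop (𝓝 0)) :
    MemMu μ φ₀ X := by
  refine ⟨hX, fun α hα => EReal.tendsto_nhds_zero_of_eventually_le
    (fun N => hatphi_nonneg h fun ω => Set.indicator_apply_nonneg fun _ => by positivity)
    fun δ hδ => ?_⟩
  have hr : 0 < min (δ / α) (1 / α) := lt_min (by positivity) (by positivity)
  filter_upwards [htail.eventually_lt_const (EReal.coe_pos.2 hr)] with N hN
  obtain ⟨r, hr0, hrr, h1⟩ := exists_hatphi_le_one_of_gauge_lt hN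
  have hαr : α * r ≤ δ ∧ α * r ≤ 1 := by
    rw [← le_div_iff₀' hα, ← le_div_iff₀' hα]
    exact le_min_iff.1 hrr.le
  have hscale : tailFn X α N =
      fun ω => α * r * (|{ω | (N : ℝ) < |X ω|}.indicator X ω| / r) := by
    rw [tailFn_eq_mul_abs_indicator]
    funext ω
    field_simp
  rw [hscale]
  refine (hatphi_const_mul_le h (fun ω => by positivity) (by positivity)
    hαr.2 zero_le_one h1).trans ?_
  exact_mod_cast (mul_one (α * r)).le.trans hαr.1

theorem tendsto_measure_setOf_lt_abs [IsFiniteMeasure μ] {f : Ω → ℝ} (hf : Measurable f) :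
    Tendsto (fun N : ℕ => μ {ω | (N : ℝ) < |f ω|}) atTop (𝓝 0) := by
  have hempty : ⋂ N : ℕ, {ω | (N : ℝ) < |f ω|} = ∅ :=
    Set.eq_empty_of_forall_notMem fun ω hω => by
      obtain ⟨N, hN⟩ := exists_nat_ge |f ω|
      exact (Set.mem_iInter.1 hω N).not_ge hN
  simpa [hempty, Function.comp_def] using tendsto_measure_iInter_atTop
    (fun N => (measurableSet_lt measurable_const hf.abs).nullMeasurableSet)
    (antitone_setOf_lt_abs f) ⟨0, measure_ne_top μ _⟩

end Tail

/-- characterization of `M^φ̂_u` via the gauge: `X ∈ M^φ̂_u` iff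
`‖X 1_{{|X|>N}}‖_φ̂ → 0` iff `‖X 1_{A_n}‖_φ̂ → 0` whenever `ℙ(A_n) ↓ 0`. -/
theorem stmt10 (μ : Measure Ω) [IsProbabilityMeasure μ]
    (φ₀ : (Ω → ℝ) → ℝ) (h : Standing μ φ₀)
    (X : Ω → ℝ) (hX : AEStronglyMeasurable X μ) :
    List.TFAE
      [ MemMu μ φ₀ X,
        Tendsto (fun N : ℕ => gauge μ φ₀ (Set.indicator {ω | (N : ℝ) < |X ω|} X))
          atTop (𝓝 (0 : EReal)),
        ∀ A : ℕ → Set Ω, (∀ n, MeasurableSet (A n)) →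
          Antitone (fun n => μ (A n)) → Tendsto (fun n => μ (A n)) atTop (𝓝 0) →
          Tendsto (fun n => gauge μ φ₀ (Set.indicator (A n) X)) atTop (𝓝 (0 : EReal)) ] := by
  tfae_have 1 → 3 := fun hMu A hAm _ hA => hMu.tendsto_gauge_indicator h hAm hA
  tfae_have 3 → 2 := fun h3 => by
    have hXm := hX.stronglyMeasurable_mk.measurable
    refine (h3 _ (fun N => measurableSet_lt measurable_const hXm.abs)
      (fun _ _ hmn => measure_mono (antitone_setOf_lt_abs _ hmn))
      (tendsto_measure_setOf_lt_abs hXm)).congr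
      fun N => gauge_congr_ae ?_
    filter_upwards [hX.ae_eq_mk] with ω hω
    simp [Set.indicator_apply, hω]
  tfae_have 2 → 1 := memMu_of_tendsto_gauge_tail h hX
  tfae_finish

end MaxLebExt
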